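/- arXiv:2405.07995 — 2 statements merged into one kernel-verified Lean document; each statement's English description precedes it below -/
import Mathlib

section
/- For all x ∈ [0,1] and y ∈ [0,1], the function k_1(x,y) = (16 y^2 - 14 x^2 y^2 - 2 x^4 y^2 - 9 x^3 (1 - 2 y^2) + 18 x (1 - y^2))/576 is at most 1/36. -/
theorem stmt_18 (x y : ℝ) (hx : x ∈ Set.Icc (0:ℝ) 1) (hy : y ∈ Set.Icc (0:ℝ) 1) :
    (16 * y ^ 2 - 14 * x ^ 2 * y ^ 2 - 2 * x ^ 4 * y ^ 2 - 9 * x ^ 3 * (1 - 2 * y ^ 2) +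
      18 * x * (1 - y ^ 2)) / 576 ≤ 1 / 36 := by
  obtain ⟨hx0, hx1⟩ := hx
  obtain ⟨hy0, hy1⟩ := hy
  have hy2 : y ^ 2 ≤ 1 := by nlinarith
  have h1 : 16 - 18 * x + 9 * x ^ 3 ≥ 0 := by nlinarith [sq_nonneg (1 - x), sq_nonneg x, mul_nonneg hx0 (sq_nonneg (1 - x))]
  have h2 : x ^ 2 * (14 - 9 * x + 2 * x ^ 2) ≥ 0 := by nlinarith [sq_nonneg x]
  have h3 : (1 - y ^ 2) * (16 - 18 * x + 9 * x ^ 3) ≥ 0 :=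
    mul_nonneg (by linarith) h1
  have h4 : y ^ 2 * (x ^ 2 * (14 - 9 * x + 2 * x ^ 2)) ≥ 0 :=
    mul_nonneg (sq_nonneg y) h2
  rw [div_le_div_iff₀ (by norm_num) (by norm_num)]
  nlinarith [h3, h4]
end

section
/- For all x ∈ [0,1] and y ∈ [0,1], the function n_1(x,y) = (1 - x^2)(5 y^2 + x^2 y^2 + 6 x (1 - y^2))/2880 is at most 1/576. -/
theorem stmt_19 (x y : ℝ) (hx : x ∈ Set.Icc (0:ℝ) 1) (hy : y ∈ Set.Icc (0:ℝ) 1) :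
    (1 - x ^ 2) * (5 * y ^ 2 + x ^ 2 * y ^ 2 + 6 * x * (1 - y ^ 2)) / 2880 ≤ 1 / 576 := by
  obtain ⟨hx0, hx1⟩ := hx
  obtain ⟨hy0, hy1⟩ := hy
  have h1 : (1 - x ^ 2) * ((1 - x) * (5 - x) * (1 - y ^ 2)) ≥ 0 := by
    apply mul_nonneg
    · nlinarith
    · apply mul_nonneg (mul_nonneg (by linarith) (by linarith))
      nlinarith
  nlinarith [sq_nonneg x, sq_nonneg (x^2)]
end
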